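/- Let X = (X̄, T) be a scaled simplicial set that has the right lifting property with respect to every scaled anodyne map, and let u₁X be the simplicial subset of X̄ consisting of those simplices all of whose 2-dimensional faces lie in T. Then u₁X is a quasicategory, i.e., every inner horn Λⁿᵢ → u₁X (0 < i < n) extends to Δⁿ → u₁X. -/

import Mathlib

open CategoryTheory Simplicial
namespace ScaledSSet

def stdSimplex (n : ℕ) : SSet.{0} where
  obj m := Fin (m.unop.len + 1) →o Fin (n + 1)
  map φ := TypeCat.ofHom fun f => f.comp φ.unop.toOrderHom
  map_id m := rfl
  map_comp φ ψ := rfl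

instance stdFunLike (n : ℕ) (m : SimplexCategoryᵒᵖ) :
    FunLike ((stdSimplex n).obj m) (Fin (m.unop.len + 1)) (Fin (n + 1)) :=
  inferInstanceAs (FunLike (Fin (m.unop.len + 1) →o Fin (n + 1)) _ _)

@[simp] lemma stdSimplex_mk_apply {n : ℕ} {m : SimplexCategoryᵒᵖ}
    (f : Fin (m.unop.len + 1) → Fin (n + 1)) (hf : Monotone f) (x : Fin (m.unop.len + 1)) :
    (⟨f, hf⟩ : (stdSimplex n).obj m) x = f x := rfl

@[simp] lemma stdSimplex_map_apply {n : ℕ} {m m' : SimplexCategoryᵒᵖ} (φ : m ⟶ m')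
    (f : (stdSimplex n).obj m) (x : Fin (m'.unop.len + 1)) :
    ((stdSimplex n).map φ f) x = f (φ.unop.toOrderHom x) := rfl

def subOf (X : SSet.{0}) (P : ∀ m : SimplexCategoryᵒᵖ, Set (X.obj m))
    (hP : ∀ {m m' : SimplexCategoryᵒᵖ} (φ : m ⟶ m') {σ : X.obj m},
      σ ∈ P m → X.map φ σ ∈ P m') : SSet.{0} where
  obj m := P m
  map φ := TypeCat.ofHom fun σ => ⟨X.map φ σ.1, hP φ σ.2⟩
  map_id _ := by ext σ; exact FunctorToTypes.map_id_apply X σ.1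
  map_comp φ ψ := by ext σ; exact FunctorToTypes.map_comp_apply X φ ψ σ.1

def subIncl (X : SSet.{0}) (P : ∀ m : SimplexCategoryᵒᵖ, Set (X.obj m))
    (hP : ∀ {m m' : SimplexCategoryᵒᵖ} (φ : m ⟶ m') {σ : X.obj m},
      σ ∈ P m → X.map φ σ ∈ P m') : subOf X P hP ⟶ X where
  app _ := TypeCat.ofHom fun σ => σ.1
  naturality _ _ _ := rfl

def IsDegen2 (X : SSet.{0}) (σ : X _⦋2⦌) : Prop :=
  ∃ τ : X _⦋1⦌, σ = X.σ 0 τ ∨ σ = X.σ 1 τ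

lemma isDegen2_of_sub (X : SSet.{0}) (P : ∀ m : SimplexCategoryᵒᵖ, Set (X.obj m))
    (hP : ∀ {m m' : SimplexCategoryᵒᵖ} (φ : m ⟶ m') {σ : X.obj m},
      σ ∈ P m → X.map φ σ ∈ P m')
    (σ : (subOf X P hP) _⦋2⦌) (h : IsDegen2 (subOf X P hP) σ) : IsDegen2 X σ.1 := by
  obtain ⟨τ, h | h⟩ := h
  · exact ⟨τ.1, Or.inl (by subst h; rfl)⟩
  · exact ⟨τ.1, Or.inr (by subst h; rfl)⟩

lemma isDegen2_map {X Y : SSet.{0}} (f : X ⟶ Y) {σ : X _⦋2⦌}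
    (h : IsDegen2 X σ) : IsDegen2 Y (f.app _ σ) := by
  obtain ⟨τ, h | h⟩ := h
  · exact ⟨f.app _ τ, Or.inl (by subst h; exact NatTrans.naturality_apply f _ τ)⟩
  · exact ⟨f.app _ τ, Or.inr (by subst h; exact NatTrans.naturality_apply f _ τ)⟩

structure SScaled : Type 1 where
  carrier : SSet.{0}
  thin : Set (carrier _⦋2⦌)
  degen_mem : ∀ σ : carrier _⦋2⦌, IsDegen2 carrier σ → σ ∈ thin

@[ext]
structure SHom (A B : SScaled) : Type where
  map : A.carrier ⟶ B.carrier
  preserves : ∀ σ ∈ A.thin, map.app (Opposite.op (SimplexCategory.mk 2)) σ ∈ B.thin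

instance : Category SScaled where
  Hom := SHom
  id A := ⟨𝟙 A.carrier, fun σ h => by simpa using h⟩
  comp f g := ⟨f.map ≫ g.map, fun σ h => by
    simpa using g.preserves _ (f.preserves _ h)⟩
  id_comp f := by apply SHom.ext; simp
  comp_id f := by apply SHom.ext; simp
  assoc f g h := by apply SHom.ext; simp

def SScaled.restrict (B : SScaled) (P : ∀ m : SimplexCategoryᵒᵖ, Set (B.carrier.obj m))
    (hP : ∀ {m m' : SimplexCategoryᵒᵖ} (φ : m ⟶ m') {σ : B.carrier.obj m},
      σ ∈ P m → B.carrier.map φ σ ∈ P m') : SScaled where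
  carrier := subOf B.carrier P hP
  thin := {σ | σ.1 ∈ B.thin}
  degen_mem σ h := B.degen_mem _ (isDegen2_of_sub _ _ _ _ h)

def SScaled.restrictIncl (B : SScaled) (P : ∀ m : SimplexCategoryᵒᵖ, Set (B.carrier.obj m))
    (hP : ∀ {m m' : SimplexCategoryᵒᵖ} (φ : m ⟶ m') {σ : B.carrier.obj m},
      σ ∈ P m → B.carrier.map φ σ ∈ P m') : B.restrict P hP ⟶ B where
  map := subIncl B.carrier P hP
  preserves _ h := h

def tri {n : ℕ} (a b c : Fin (n + 1)) (hab : a ≤ b) (hbc : b ≤ c) :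
    (stdSimplex n) _⦋2⦌ :=
  ⟨![a, b, c], by
    intro i j hij
    fin_cases i <;> fin_cases j <;>
      simp_all [Matrix.cons_val_zero, Matrix.cons_val_one, Matrix.head_cons] <;>
      first
        | rfl
        | exact hab
        | exact hbc
        | exact le_trans hab hbc⟩

/-! ### The generating scaled anodyne maps -/

/-- The membership predicate of the horn `Λⁿᵢ ⊆ Δⁿ`: the simplices whose vertices,
together with `i`, do not exhaust `[n]`. -/
def hornP (n : ℕ) (i : Fin (n + 1)) :
    ∀ m : SimplexCategoryᵒᵖ, Set ((stdSimplex n).obj m) :=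
  fun _ => {f | ∃ s : Fin (n + 1), s ≠ i ∧ ∀ x, f x ≠ s}

lemma hornP_closed (n : ℕ) (i : Fin (n + 1)) :
    ∀ {m m' : SimplexCategoryᵒᵖ} (φ : m ⟶ m') {σ : (stdSimplex n).obj m},
      σ ∈ hornP n i m → (stdSimplex n).map φ σ ∈ hornP n i m' := by
  rintro m m' φ σ ⟨s, hsi, hs⟩
  exact ⟨s, hsi, fun x => hs _⟩

/-- The 2-simplex `Δ^{i-1,i,i+1}` of `Δⁿ`, for `0 < i < n`. -/
def an1Tri (n i : ℕ) (h0 : 0 < i) (hn : i < n) : (stdSimplex n) _⦋2⦌ :=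
  tri ⟨i - 1, by omega⟩ ⟨i, by omega⟩ ⟨i + 1, by omega⟩
    (Fin.mk_le_mk.mpr (by omega)) (Fin.mk_le_mk.mpr (by omega))

/-- The target of the generating map (An1): `Δⁿ` scaled by `{Δ^{i-1,i,i+1}} ∪ {degenerate}`. -/
def an1Target (n i : ℕ) (h0 : 0 < i) (hn : i < n) : SScaled where
  carrier := stdSimplex n
  thin := {σ | IsDegen2 _ σ ∨ σ = an1Tri n i h0 hn}
  degen_mem _ h := Or.inl h

/-- The source of the generating map (An1): the horn `Λⁿᵢ` with the restricted scaling. -/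
def an1Source (n i : ℕ) (h0 : 0 < i) (hn : i < n) : SScaled :=
  (an1Target n i h0 hn).restrict (hornP n ⟨i, by omega⟩) (hornP_closed n ⟨i, by omega⟩)

/-- The generating scaled anodyne map (An1). -/
def an1Map (n i : ℕ) (h0 : 0 < i) (hn : i < n) :
    an1Source n i h0 hn ⟶ an1Target n i h0 hn :=
  SScaled.restrictIncl (an1Target n i h0 hn) (hornP n ⟨i, by omega⟩)
    (hornP_closed n ⟨i, by omega⟩)

/-- The scaling `T₀` of `Δ⁴` appearing in the generating map (An2). -/
def an2T0 : Set ((stdSimplex 4) _⦋2⦌) :=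
  {σ | IsDegen2 _ σ ∨
    σ = tri (0 : Fin 5) 2 4 (by decide) (by decide) ∨
    σ = tri (1 : Fin 5) 2 3 (by decide) (by decide) ∨
    σ = tri (0 : Fin 5) 1 3 (by decide) (by decide) ∨
    σ = tri (1 : Fin 5) 3 4 (by decide) (by decide) ∨
    σ = tri (0 : Fin 5) 1 2 (by decide) (by decide)}

def an2Source : SScaled where
  carrier := stdSimplex 4
  thin := an2T0
  degen_mem _ h := Or.inl h

def an2Target : SScaled where
  carrier := stdSimplex 4
  thin := an2T0 ∪
    {tri (0 : Fin 5) 3 4 (by decide) (by decide),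
     tri (0 : Fin 5) 1 4 (by decide) (by decide)}
  degen_mem _ h := Or.inl (Or.inl h)

/-- The generating scaled anodyne map (An2). -/
def an2Map : an2Source ⟶ an2Target where
  map := 𝟙 _
  preserves σ h := Or.inl (by exact h)

/-- The collapse of a simplicial subset `A ⊆ X` to a point: a concrete model of the
pushout `X ⨿_A Δ⁰` (for `A` nonempty in each degree). -/
def collapse (X : SSet.{0}) (A : ∀ m : SimplexCategoryᵒᵖ, Set (X.obj m))
    (hA : ∀ {m m' : SimplexCategoryᵒᵖ} (φ : m ⟶ m') {σ : X.obj m},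
      σ ∈ A m → X.map φ σ ∈ A m') : SSet.{0} where
  obj m := Quot (fun f g : X.obj m => f ∈ A m ∧ g ∈ A m)
  map φ := TypeCat.ofHom (Quot.map (X.map φ) (fun _ _ h => ⟨hA φ h.1, hA φ h.2⟩))
  map_id m := by
    ext σ
    induction σ using Quot.ind with
    | _ f => exact congrArg (Quot.mk _) (FunctorToTypes.map_id_apply X f)
  map_comp φ ψ := by
    ext σ
    induction σ using Quot.ind with
    | _ f => exact congrArg (Quot.mk _) (FunctorToTypes.map_comp_apply X φ ψ f)

/-- The simplices of `Δⁿ` lying in the edge `Δ^{0,1}`. -/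
def edge01P (n : ℕ) : ∀ m : SimplexCategoryᵒᵖ, Set ((stdSimplex n).obj m) :=
  fun _ => {f | ∀ x, (f x).val ≤ 1}

lemma edge01P_closed (n : ℕ) :
    ∀ {m m' : SimplexCategoryᵒᵖ} (φ : m ⟶ m') {σ : (stdSimplex n).obj m},
      σ ∈ edge01P n m → (stdSimplex n).map φ σ ∈ edge01P n m' := by
  intro m m' φ σ h x
  exact h _

/-- The underlying simplicial set of the target of (An3): `Δⁿ ⨿_{Δ^{0,1}} Δ⁰`. -/
def an3TargetSSet (n : ℕ) (hn : 2 < n) : SSet.{0} :=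
  collapse (stdSimplex n) (edge01P n) (edge01P_closed n)

def an3Horn (n : ℕ) (hn : 2 < n) : SSet.{0} :=
  subOf (stdSimplex n) (hornP n 0) (hornP_closed n 0)

/-- The underlying simplicial set of the source of (An3): `Λⁿ₀ ⨿_{Δ^{0,1}} Δ⁰`. -/
def an3SourceSSet (n : ℕ) (hn : 2 < n) : SSet.{0} :=
  collapse (an3Horn n hn) (fun m => {f | f.1 ∈ edge01P n m})
    (fun {m m'} φ {σ} h => edge01P_closed n φ h)

def an3Tri (n : ℕ) (hn : 2 < n) : (stdSimplex n) _⦋2⦌ :=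
  tri ⟨0, by omega⟩ ⟨1, by omega⟩ ⟨n, by omega⟩
    (Fin.mk_le_mk.mpr (by omega)) (Fin.mk_le_mk.mpr (by omega))

lemma an3Tri_mem_horn (n : ℕ) (hn : 2 < n) :
    an3Tri n hn ∈ hornP n 0 (Opposite.op (SimplexCategory.mk 2)) := by
  refine ⟨⟨2, by omega⟩, Fin.ne_of_val_ne (by simp), fun x => ?_⟩
  fin_cases x
  · exact Fin.ne_of_val_ne (show (0 : ℕ) ≠ 2 by omega)
  · exact Fin.ne_of_val_ne (show (1 : ℕ) ≠ 2 by omega)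
  · exact Fin.ne_of_val_ne (show (n : ℕ) ≠ 2 by omega)

def an3Target (n : ℕ) (hn : 2 < n) : SScaled where
  carrier := an3TargetSSet n hn
  thin := {x | IsDegen2 _ x ∨ x = Quot.mk _ (an3Tri n hn)}
  degen_mem _ h := Or.inl h

def an3Source (n : ℕ) (hn : 2 < n) : SScaled where
  carrier := an3SourceSSet n hn
  thin := {x | IsDegen2 _ x ∨ x = Quot.mk _ ⟨an3Tri n hn, an3Tri_mem_horn n hn⟩}
  degen_mem _ h := Or.inl h

/-- The generating scaled anodyne map (An3). -/
def an3proj (n : ℕ) (hn : 2 < n) : an3SourceSSet n hn ⟶ an3TargetSSet n hn where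
  app m := TypeCat.ofHom (Quot.map (fun (f : (an3Horn n hn).obj m) => f.1) (fun _ _ h => ⟨h.1, h.2⟩))
  naturality _ _ φ := by ext σ; induction σ using Quot.ind; rfl

def an3Map (n : ℕ) (hn : 2 < n) : an3Source n hn ⟶ an3Target n hn where
  map := an3proj n hn
  preserves σ h := by
    obtain h | h := h
    · exact Or.inl (isDegen2_map (an3proj n hn) h)
    · exact Or.inr (by subst h; rfl)

/-! ### Weakly saturated classes and scaled anodyne maps -/

section Saturation

open Limits

variable {C : Type*} [Category C]

/-- `f` is a retract of `g` (in the arrow category). -/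
def IsRetractOf {A B X Y : C} (f : A ⟶ B) (g : X ⟶ Y) : Prop :=
  ∃ (i : A ⟶ X) (p : X ⟶ A) (j : B ⟶ Y) (q : Y ⟶ B),
    i ≫ p = 𝟙 A ∧ j ≫ q = 𝟙 B ∧ i ≫ g = f ≫ j ∧ g ≫ q = p ≫ f

/-- The restriction, to `Set.Iio j`, of a functor indexed by a (well-)ordered type,
viewed as a cocone with apex `F.obj j`. -/
@[simps]
def restCocone {J : Type} [Preorder J] (F : J ⥤ C) (j : J) :
    Cocone ((Monotone.functor (f := (Subtype.val : Set.Iio j → J))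
      (fun _ _ h => h)) ⋙ F) where
  pt := F.obj j
  ι :=
    { app := fun i => F.map (homOfLE i.2.le)
      naturality := fun i i' hii' => by
        dsimp [Monotone.functor]
        rw [← F.map_comp]
        simp }

/-- A class of morphisms is weakly saturated if it is stable under pushouts
(cobase change), retracts, and transfinite composition. -/
structure IsWeaklySaturated (P : MorphismProperty C) : Prop where
  pushouts : ∀ ⦃A B A' B' : C⦄ (f : A ⟶ B) (g : A ⟶ A') (h : B ⟶ B') (i : A' ⟶ B'),
    IsPushout f g h i → P f → P i
  retracts : ∀ ⦃A B X Y : C⦄ (f : A ⟶ B) (g : X ⟶ Y), IsRetractOf f g → P g → P f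
  transfinite : ∀ (J : Type) [LinearOrder J] [OrderBot J] [SuccOrder J]
    [WellFoundedLT J] (F : J ⥤ C) (c : Cocone F) (_ : IsColimit c)
    (_ : ∀ j : J, Order.IsSuccLimit j → Nonempty (IsColimit (restCocone F j)))
    (_ : ∀ j : J, ¬IsMax j → P (F.map (homOfLE (Order.le_succ j)))),
    P (c.ι.app ⊥)

end Saturation

/-- The generating scaled anodyne maps (An1), (An2), (An3). -/
inductive AnodyneGenerator : ∀ ⦃A B : SScaled⦄, (A ⟶ B) → Prop
  /-- The generator (An1). -/
  | an1 (n i : ℕ) (h0 : 0 < i) (hn : i < n) : AnodyneGenerator (an1Map n i h0 hn)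
  /-- The generator (An2). -/
  | an2 : AnodyneGenerator an2Map
  /-- The generator (An3). -/
  | an3 (n : ℕ) (hn : 2 < n) : AnodyneGenerator (an3Map n hn)

/-- A map of scaled simplicial sets is *scaled anodyne* if it lies in the weakly
saturated class of maps generated by the maps (An1), (An2) and (An3); that is,
if it lies in every weakly saturated class of morphisms of `SScaled` containing
these generating maps. -/
def ScaledAnodyne : MorphismProperty SScaled := fun _ _ f =>
  ∀ P : MorphismProperty SScaled, IsWeaklySaturated P →
    (∀ ⦃A B : SScaled⦄ (g : A ⟶ B), AnodyneGenerator g → P g) → P f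

/-- The underlying simplicial set `u₁X` of a scaled simplicial set: the simplicial
subset of the carrier consisting of those simplices all of whose 2-dimensional
faces are thin. -/
def u1 (X : SScaled) : SSet.{0} :=
  subOf X.carrier
    (fun m => {σ | ∀ φ : SimplexCategory.mk 2 ⟶ m.unop, X.carrier.map φ.op σ ∈ X.thin})
    (by
      intro m m' ψ σ h φ
      have : X.carrier.map φ.op (X.carrier.map ψ σ) =
          X.carrier.map ((φ ≫ ψ.unop).op) σ :=
        (FunctorToTypes.map_comp_apply X.carrier ψ φ.op σ).symm
      rw [this]
      exact h _)

open Opposite SimplexCategory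

lemma gen_scaledAnodyne {A B : SScaled} {g : A ⟶ B} (h : AnodyneGenerator g) :
    ScaledAnodyne g := fun _ _ hgen => hgen g h

abbrev two : SimplexCategoryᵒᵖ := op (SimplexCategory.mk 2)

/-- The morphism in `SimplexCategory` corresponding to a simplex of `stdSimplex k`. -/
def elHom {k : ℕ} {m : SimplexCategoryᵒᵖ} (f : (stdSimplex k).obj m) :
    m.unop ⟶ SimplexCategory.mk k := SimplexCategory.Hom.mk f

lemma map_comp_elt (X : SSet.{0}) {a b c : SimplexCategory} (p : b ⟶ a) (q : c ⟶ b)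
    (σ : X.obj (op a)) :
    X.map q.op (X.map p.op σ) = X.map (q ≫ p).op σ := by
  rw [← FunctorToTypes.map_comp_apply]; rfl

/-- The map `stdSimplex k ⟶ Y` classified by a `k`-simplex of `Y`. -/
def yonMap (Y : SSet.{0}) (k : ℕ) (τ : Y.obj (op (SimplexCategory.mk k))) :
    stdSimplex k ⟶ Y where
  app m := TypeCat.ofHom fun f => Y.map (elHom f).op τ
  naturality m m' φ := by
    ext f
    exact FunctorToTypes.map_comp_apply Y (elHom f).op φ τ

def idElt (k : ℕ) : (stdSimplex k).obj (op (SimplexCategory.mk k)) := OrderHom.id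

lemma app_eq {k : ℕ} {Y : SSet.{0}} (V : stdSimplex k ⟶ Y)
    {m : SimplexCategoryᵒᵖ} (f : (stdSimplex k).obj m) :
    V.app m f = Y.map (elHom f).op (V.app (op (SimplexCategory.mk k)) (idElt k)) :=
  NatTrans.naturality_apply V (elHom f).op (idElt k)

def edg {k : ℕ} (a b : Fin (k + 1)) (hab : a ≤ b) :
    (stdSimplex k).obj (op (SimplexCategory.mk 1)) :=
  ⟨![a, b], by
    intro i j hij
    fin_cases i <;> fin_cases j <;>
      simp_all [Matrix.cons_val_zero, Matrix.cons_val_one, Matrix.head_cons] <;>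
      first | rfl | exact hab⟩

lemma isDegen2_of_eq {k : ℕ} (g : (stdSimplex k).obj two)
    (h : g 0 = g 1 ∨ g 1 = g 2) : IsDegen2 (stdSimplex k) g := by
  have mono := OrderHom.monotone (g : Fin 3 →o Fin (k + 1))
  rcases h with h | h
  · refine ⟨edg (g 0) (g 2) (mono (by decide)), Or.inl ?_⟩
    apply OrderHom.ext
    funext x
    fin_cases x
    · rfl
    · exact h.symm
    · rfl
  · refine ⟨edg (g 0) (g 1) (mono (by decide)), Or.inr ?_⟩
    apply OrderHom.ext
    funext x
    fin_cases x
    · rfl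
    · rfl
    · exact h.symm

lemma thin_elHom_degen (X : SScaled) {k : ℕ} (σ : X.carrier.obj (op (SimplexCategory.mk k)))
    {g : (stdSimplex k).obj two} (h : IsDegen2 (stdSimplex k) g) :
    X.carrier.map (elHom g).op σ ∈ X.thin :=
  X.degen_mem _ (isDegen2_map (yonMap X.carrier k σ) h)

lemma an2_consequence (X : SScaled)
    (hX : ∀ ⦃A B : SScaled⦄ (g : A ⟶ B), ScaledAnodyne g →
      ∀ u : A ⟶ X, ∃ v : B ⟶ X, g ≫ v = u)
    (σ4 : X.carrier.obj (op (SimplexCategory.mk 4)))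
    (hT : ∀ f ∈ an2T0, X.carrier.map (elHom f).op σ4 ∈ X.thin) :
    X.carrier.map (elHom (tri (0 : Fin 5) 3 4 (by decide) (by decide))).op σ4 ∈ X.thin ∧
    X.carrier.map (elHom (tri (0 : Fin 5) 1 4 (by decide) (by decide))).op σ4 ∈ X.thin := by
  obtain ⟨v, hv⟩ := hX an2Map (gen_scaledAnodyne AnodyneGenerator.an2)
    ⟨yonMap X.carrier 4 σ4, fun f hf => hT f hf⟩
  have hmap : v.map = yonMap X.carrier 4 σ4 := by
    have := congrArg SHom.map hv
    change 𝟙 _ ≫ v.map = _ at this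
    simpa using this
  constructor
  · have := v.preserves (tri (0 : Fin 5) 3 4 (by decide) (by decide))
      (Or.inr (Set.mem_insert _ _))
    rw [hmap] at this
    exact this
  · have := v.preserves (tri (0 : Fin 5) 1 4 (by decide) (by decide))
      (Or.inr (Set.mem_insert_of_mem _ rfl))
    rw [hmap] at this
    exact this

/-- The degeneracy `[4] ⟶ [3]` collapsing `1, 2`. -/
def p1 : SimplexCategory.mk 4 ⟶ SimplexCategory.mk 3 :=
  SimplexCategory.Hom.mk ⟨![0, 1, 1, 2, 3], by decide⟩

/-- The degeneracy `[4] ⟶ [3]` collapsing `2, 3`. -/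
def p2 : SimplexCategory.mk 4 ⟶ SimplexCategory.mk 3 :=
  SimplexCategory.Hom.mk ⟨![0, 1, 2, 2, 3], by decide⟩

lemma comp_p_eq {p : SimplexCategory.mk 4 ⟶ SimplexCategory.mk 3}
    {a b c : Fin 5} {hab : a ≤ b} {hbc : b ≤ c} {a' b' c' : Fin 4} {hab' : a' ≤ b'} {hbc' : b' ≤ c'}
    (h1 : p.toOrderHom a = a') (h2 : p.toOrderHom b = b') (h3 : p.toOrderHom c = c') :
    elHom (tri a b c hab hbc) ≫ p = elHom (tri a' b' c' hab' hbc') := by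
  apply SimplexCategory.Hom.ext'
  apply OrderHom.ext
  funext x
  fin_cases x
  · exact h1
  · exact h2
  · exact h3

lemma thin_comp1 (X : SScaled)
    (hX : ∀ ⦃A B : SScaled⦄ (g : A ⟶ B), ScaledAnodyne g →
      ∀ u : A ⟶ X, ∃ v : B ⟶ X, g ≫ v = u)
    (σ : X.carrier.obj (op (SimplexCategory.mk 3)))
    (h012 : X.carrier.map (elHom (tri (0 : Fin 4) 1 2 (by decide) (by decide))).op σ ∈ X.thin)
    (h013 : X.carrier.map (elHom (tri (0 : Fin 4) 1 3 (by decide) (by decide))).op σ ∈ X.thin)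
    (h123 : X.carrier.map (elHom (tri (1 : Fin 4) 2 3 (by decide) (by decide))).op σ ∈ X.thin) :
    X.carrier.map (elHom (tri (0 : Fin 4) 2 3 (by decide) (by decide))).op σ ∈ X.thin := by
  have key := an2_consequence X hX (X.carrier.map p1.op σ) ?_
  · have e := map_comp_elt X.carrier p1 (elHom (tri (0 : Fin 5) 3 4 (by decide) (by decide))) σ
    rw [comp_p_eq (p := p1) (a' := (0 : Fin 4)) (b' := 2) (c' := 3)
      (hab' := by decide) (hbc' := by decide) rfl rfl rfl] at e
    rw [e] at key
    exact key.1
  · rintro f (h | rfl | rfl | rfl | rfl | rfl)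
    · exact thin_elHom_degen X (X.carrier.map p1.op σ) h
    all_goals rw [map_comp_elt]
    · rw [comp_p_eq (p := p1) (a' := (0 : Fin 4)) (b' := 1) (c' := 3)
        (hab' := by decide) (hbc' := by decide) rfl rfl rfl]
      exact h013
    · rw [comp_p_eq (p := p1) (a' := (1 : Fin 4)) (b' := 1) (c' := 2)
        (hab' := by decide) (hbc' := by decide) rfl rfl rfl]
      exact thin_elHom_degen X σ (isDegen2_of_eq _ (Or.inl (by decide)))
    · rw [comp_p_eq (p := p1) (a' := (0 : Fin 4)) (b' := 1) (c' := 2)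
        (hab' := by decide) (hbc' := by decide) rfl rfl rfl]
      exact h012
    · rw [comp_p_eq (p := p1) (a' := (1 : Fin 4)) (b' := 2) (c' := 3)
        (hab' := by decide) (hbc' := by decide) rfl rfl rfl]
      exact h123
    · rw [comp_p_eq (p := p1) (a' := (0 : Fin 4)) (b' := 1) (c' := 1)
        (hab' := by decide) (hbc' := by decide) rfl rfl rfl]
      exact thin_elHom_degen X σ (isDegen2_of_eq _ (Or.inr (by decide)))

lemma thin_comp2 (X : SScaled)
    (hX : ∀ ⦃A B : SScaled⦄ (g : A ⟶ B), ScaledAnodyne g →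
      ∀ u : A ⟶ X, ∃ v : B ⟶ X, g ≫ v = u)
    (σ : X.carrier.obj (op (SimplexCategory.mk 3)))
    (h012 : X.carrier.map (elHom (tri (0 : Fin 4) 1 2 (by decide) (by decide))).op σ ∈ X.thin)
    (h023 : X.carrier.map (elHom (tri (0 : Fin 4) 2 3 (by decide) (by decide))).op σ ∈ X.thin)
    (h123 : X.carrier.map (elHom (tri (1 : Fin 4) 2 3 (by decide) (by decide))).op σ ∈ X.thin) :
    X.carrier.map (elHom (tri (0 : Fin 4) 1 3 (by decide) (by decide))).op σ ∈ X.thin := by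
  have key := an2_consequence X hX (X.carrier.map p2.op σ) ?_
  · have e := map_comp_elt X.carrier p2 (elHom (tri (0 : Fin 5) 1 4 (by decide) (by decide))) σ
    rw [comp_p_eq (p := p2) (a' := (0 : Fin 4)) (b' := 1) (c' := 3)
      (hab' := by decide) (hbc' := by decide) rfl rfl rfl] at e
    rw [e] at key
    exact key.2
  · rintro f (h | rfl | rfl | rfl | rfl | rfl)
    · exact thin_elHom_degen X (X.carrier.map p2.op σ) h
    all_goals rw [map_comp_elt]
    · rw [comp_p_eq (p := p2) (a' := (0 : Fin 4)) (b' := 2) (c' := 3)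
        (hab' := by decide) (hbc' := by decide) rfl rfl rfl]
      exact h023
    · rw [comp_p_eq (p := p2) (a' := (1 : Fin 4)) (b' := 2) (c' := 2)
        (hab' := by decide) (hbc' := by decide) rfl rfl rfl]
      exact thin_elHom_degen X σ (isDegen2_of_eq _ (Or.inr (by decide)))
    · rw [comp_p_eq (p := p2) (a' := (0 : Fin 4)) (b' := 1) (c' := 2)
        (hab' := by decide) (hbc' := by decide) rfl rfl rfl]
      exact h012
    · rw [comp_p_eq (p := p2) (a' := (1 : Fin 4)) (b' := 2) (c' := 3)
        (hab' := by decide) (hbc' := by decide) rfl rfl rfl]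
      exact h123
    · rw [comp_p_eq (p := p2) (a' := (0 : Fin 4)) (b' := 1) (c' := 2)
        (hab' := by decide) (hbc' := by decide) rfl rfl rfl]
      exact h012

/-! ### Horn translation -/

def hornElt {n : ℕ} {i : Fin (n + 1)} {m : SimplexCategoryᵒᵖ} (f : (stdSimplex n).obj m)
    (hf : f ∈ hornP n i m) : (Λ[n, i] : SSet.{0}).obj m :=
  ⟨SSet.stdSimplex.objMk (f : Fin (m.unop.len + 1) →o Fin (n + 1)), by
    obtain ⟨s, hsi, hs⟩ := hf
    intro h
    rcases Set.eq_univ_iff_forall.mp h s with hr | hri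
    · obtain ⟨x, hx⟩ := hr
      exact hs x hx
    · exact hsi hri⟩

lemma hornP_of_mem {n : ℕ} {i : Fin (n + 1)} {m : SimplexCategoryᵒᵖ}
    (a : (Λ[n, i] : SSet.{0}).obj m) :
    (SSet.stdSimplex.asOrderHom a.1 : (stdSimplex n).obj m) ∈ hornP n i m := by
  obtain ⟨s, hs⟩ := Set.ne_univ_iff_exists_notMem _ |>.mp a.2
  rw [Set.mem_union] at hs
  push_neg at hs
  exact ⟨s, hs.2, fun x hx => hs.1 ⟨x, hx⟩⟩

lemma u1_elt_thin (X : SScaled) (e : (u1 X).obj two) : e.1 ∈ X.thin := by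
  have h := e.2 (𝟙 (SimplexCategory.mk 2))
  rwa [show (𝟙 (SimplexCategory.mk 2)).op = 𝟙 two from rfl,
    FunctorToTypes.map_id_apply] at h

def u0map (X : SScaled) {n : ℕ} {i : Fin (n + 1)} (σ₀ : (Λ[n, i] : SSet.{0}) ⟶ u1 X)
    (h0 : 0 < i.val) (hn : i.val < n) :
    (an1Source n i.val h0 hn).carrier ⟶ X.carrier where
  app m := TypeCat.ofHom fun f => (σ₀.app m (hornElt (i := i) f.1 f.2)).1
  naturality m m' φ := by
    ext f
    exact congrArg Subtype.val
      (NatTrans.naturality_apply σ₀ φ (hornElt (i := i) f.1 f.2))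

def uScaled (X : SScaled) {n : ℕ} {i : Fin (n + 1)} (σ₀ : (Λ[n, i] : SSet.{0}) ⟶ u1 X)
    (h0 : 0 < i.val) (hn : i.val < n) : an1Source n i.val h0 hn ⟶ X :=
  ⟨u0map X σ₀ h0 hn, fun f _ => u1_elt_thin X (σ₀.app two (hornElt (i := i) f.1 f.2))⟩

lemma tri_mem_hornP {n : ℕ} {i : Fin (n + 1)} (a b c : Fin (n + 1)) (hab : a ≤ b) (hbc : b ≤ c)
    (s : Fin (n + 1)) (hsi : s ≠ i) (h1 : a ≠ s) (h2 : b ≠ s) (h3 : c ≠ s) :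
    tri a b c hab hbc ∈ hornP n i two := by
  refine ⟨s, hsi, fun x => ?_⟩
  fin_cases x
  · exact h1
  · exact h2
  · exact h3

/-- The map `Δ[n] ⟶ u1 X` classified by an `n`-simplex of `u1 X`. -/
def stdToSub (X : SScaled) (n : ℕ) (σtop : (u1 X).obj (op (SimplexCategory.mk n))) :
    (Δ[n] : SSet.{0}) ⟶ u1 X where
  app m := TypeCat.ofHom fun a => (u1 X).map (SSet.stdSimplex.objEquiv a).op σtop
  naturality m m' φ := by
    ext a
    exact FunctorToTypes.map_comp_apply (u1 X) (SSet.stdSimplex.objEquiv a).op φ σtop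

lemma filler (X : SScaled)
    (hX : ∀ ⦃A B : SScaled⦄ (g : A ⟶ B), ScaledAnodyne g →
      ∀ u : A ⟶ X, ∃ v : B ⟶ X, g ≫ v = u)
    (n : ℕ) (i : Fin (n + 1)) (h0 : 0 < i.val) (hn : i.val < n)
    (σ₀ : (Λ[n, i] : SSet.{0}) ⟶ u1 X) :
    ∃ σ : Δ[n] ⟶ u1 X, σ₀ = Λ[n, i].ι ≫ σ := by
  obtain ⟨v, hv⟩ := hX (an1Map n i.val h0 hn)
    (gen_scaledAnodyne (AnodyneGenerator.an1 n i.val h0 hn)) (uScaled X σ₀ h0 hn)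
  have hV : ∀ (m : SimplexCategoryᵒᵖ) (f : (stdSimplex n).obj m) (hf : f ∈ hornP n i m),
      v.map.app m f = (σ₀.app m (hornElt (i := i) f hf)).1 := by
    intro m f hf
    exact congrArg (fun t : an1Source n i.val h0 hn ⟶ X => t.map.app m ⟨f, hf⟩) hv
  have hTri : v.map.app two (an1Tri n i.val h0 hn) ∈ X.thin :=
    v.preserves _ (Or.inr rfl)
  have hthin : ∀ g : (stdSimplex n).obj two, v.map.app two g ∈ X.thin := by
    intro g
    by_cases hg : g ∈ hornP n i two
    · rw [hV two g hg]
      exact u1_elt_thin X _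
    · by_cases hdeg : g 0 = g 1 ∨ g 1 = g 2
      · exact X.degen_mem _ (isDegen2_map v.map (isDegen2_of_eq g hdeg))
      · push_neg at hdeg
        have mono := OrderHom.monotone (g : Fin 3 →o Fin (n + 1))
        have l01 : g 0 < g 1 := lt_of_le_of_ne (mono (by decide)) hdeg.1
        have l12 : g 1 < g 2 := lt_of_le_of_ne (mono (by decide)) hdeg.2
        have l01' : (g 0).val < (g 1).val := l01
        have l12' : (g 1).val < (g 2).val := l12
        have b2 : (g 2).val < n + 1 := (g 2).isLt
        have hsur : ∀ s : Fin (n + 1), s ≠ i → ∃ x, g x = s := by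
          intro s hs
          by_contra hc
          push_neg at hc
          exact hg ⟨s, hs, hc⟩
        have hb : n ≤ 3 := by
          by_contra hb
          push_neg at hb
          have hsub : (Finset.univ : Finset (Fin (n + 1))) ⊆ {i, g 0, g 1, g 2} := by
            intro s _
            by_cases hsi : s = i
            · simp [hsi]
            · obtain ⟨x, hx⟩ := hsur s hsi
              fin_cases x
              · rw [← hx]
                exact Finset.mem_insert_of_mem (Finset.mem_insert_self _ _)
              · rw [← hx]
                exact Finset.mem_insert_of_mem
                  (Finset.mem_insert_of_mem (Finset.mem_insert_self _ _))
              · rw [← hx]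
                exact Finset.mem_insert_of_mem (Finset.mem_insert_of_mem
                  (Finset.mem_insert_of_mem (Finset.mem_singleton_self _)))
          have c1 := Finset.card_insert_le i ({g 0, g 1, g 2} : Finset (Fin (n + 1)))
          have c2 := Finset.card_insert_le (g 0) ({g 1, g 2} : Finset (Fin (n + 1)))
          have c3 := Finset.card_insert_le (g 1) ({g 2} : Finset (Fin (n + 1)))
          have c4 : ({g 2} : Finset (Fin (n + 1))).card = 1 := Finset.card_singleton _
          have hc1 := Finset.card_le_card hsub
          rw [Finset.card_univ, Fintype.card_fin] at hc1
          omega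
        have hn23 : n = 2 ∨ n = 3 := by omega
        rcases hn23 with rfl | rfl
        · -- n = 2
          have hi1 : i.val = 1 := by omega
          have e0 : g 0 = (⟨i.val - 1, by omega⟩ : Fin 3) := by
            apply Fin.ext
            show (g 0).val = i.val - 1
            omega
          have e1 : g 1 = (⟨i.val, by omega⟩ : Fin 3) := by
            apply Fin.ext
            show (g 1).val = i.val
            omega
          have e2 : g 2 = (⟨i.val + 1, by omega⟩ : Fin 3) := by
            apply Fin.ext
            show (g 2).val = i.val + 1
            omega
          have hg' : g = an1Tri 2 i.val h0 hn := by
            apply OrderHom.ext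
            funext x
            fin_cases x
            · exact e0
            · exact e1
            · exact e2
          rw [hg']
          exact hTri
        · -- n = 3
          have conv : ∀ t : (stdSimplex 3).obj two, v.map.app two t ∈ X.thin →
              X.carrier.map (elHom t).op
                (v.map.app (op (SimplexCategory.mk 3)) (idElt 3)) ∈ X.thin := by
            intro t ht
            erw [app_eq v.map t] at ht; exact ht
          have hval : ∀ s : Fin 4, s.val ≠ i.val → (g 0 = s ∨ g 1 = s ∨ g 2 = s) := by
            intro s hs
            obtain ⟨x, hx⟩ := hsur s (fun h => hs (congrArg Fin.val h))
            fin_cases x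
            · exact Or.inl hx
            · exact Or.inr (Or.inl hx)
            · exact Or.inr (Or.inr hx)
          have hvv : ∀ s : Fin 4, s.val ≠ i.val →
              ((g 0).val = s.val ∨ (g 1).val = s.val ∨ (g 2).val = s.val) := by
            intro s hs
            rcases hval s hs with h | h | h
            · exact Or.inl (congrArg Fin.val h)
            · exact Or.inr (Or.inl (congrArg Fin.val h))
            · exact Or.inr (Or.inr (congrArg Fin.val h))
          have hi : i.val = 1 ∨ i.val = 2 := by omega
          rcases hi with hi | hi
          · -- i = 1, g = (0,2,3)
            have v0 := hvv 0 (by rw [hi]; decide)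
            have v2 := hvv 2 (by rw [hi]; decide)
            have v3 := hvv 3 (by rw [hi]; decide)
            simp only [Fin.val_zero] at v0
            have v2' : (g 0).val = 2 ∨ (g 1).val = 2 ∨ (g 2).val = 2 := v2
            have v3' : (g 0).val = 3 ∨ (g 1).val = 3 ∨ (g 2).val = 3 := v3
            have e0 : g 0 = (0 : Fin 4) := by
              apply Fin.ext
              show (g 0).val = 0
              omega
            have e1 : g 1 = (2 : Fin 4) := by
              apply Fin.ext
              show (g 1).val = 2
              omega
            have e2 : g 2 = (3 : Fin 4) := by
              apply Fin.ext
              show (g 2).val = 3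
              omega
            have hg' : g = tri (0 : Fin 4) 2 3 (by decide) (by decide) := by
              apply OrderHom.ext
              funext x
              fin_cases x
              · exact e0
              · exact e1
              · exact e2
            have hne3 : (3 : Fin 4) ≠ i := by
              intro h
              rw [← h] at hi
              exact absurd hi (by decide)
            have hne2 : (2 : Fin 4) ≠ i := by
              intro h
              rw [← h] at hi
              exact absurd hi (by decide)
            have hne0 : (0 : Fin 4) ≠ i := by
              intro h
              rw [← h] at hi
              exact absurd hi (by decide)
            have th012 := conv _ (by
              rw [hV two _ (tri_mem_hornP (0 : Fin 4) 1 2 (by decide) (by decide) 3 hne3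
                (by decide) (by decide) (by decide))]
              exact u1_elt_thin X _)
            have th013 := conv _ (by
              rw [hV two _ (tri_mem_hornP (0 : Fin 4) 1 3 (by decide) (by decide) 2 hne2
                (by decide) (by decide) (by decide))]
              exact u1_elt_thin X _)
            have th123 := conv _ (by
              rw [hV two _ (tri_mem_hornP (1 : Fin 4) 2 3 (by decide) (by decide) 0 hne0
                (by decide) (by decide) (by decide))]
              exact u1_elt_thin X _)
            rw [hg']; erw [app_eq v.map]
            exact thin_comp1 X hX _ th012 th013 th123
          · -- i = 2, g = (0,1,3)
            have v0 := hvv 0 (by rw [hi]; decide)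
            have v1 := hvv 1 (by rw [hi]; decide)
            have v3 := hvv 3 (by rw [hi]; decide)
            simp only [Fin.val_zero] at v0
            have v1' : (g 0).val = 1 ∨ (g 1).val = 1 ∨ (g 2).val = 1 := v1
            have v3' : (g 0).val = 3 ∨ (g 1).val = 3 ∨ (g 2).val = 3 := v3
            have e0 : g 0 = (0 : Fin 4) := by
              apply Fin.ext
              show (g 0).val = 0
              omega
            have e1 : g 1 = (1 : Fin 4) := by
              apply Fin.ext
              show (g 1).val = 1
              omega
            have e2 : g 2 = (3 : Fin 4) := by
              apply Fin.ext
              show (g 2).val = 3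
              omega
            have hg' : g = tri (0 : Fin 4) 1 3 (by decide) (by decide) := by
              apply OrderHom.ext
              funext x
              fin_cases x
              · exact e0
              · exact e1
              · exact e2
            have hne3 : (3 : Fin 4) ≠ i := by
              intro h
              rw [← h] at hi
              exact absurd hi (by decide)
            have hne1 : (1 : Fin 4) ≠ i := by
              intro h
              rw [← h] at hi
              exact absurd hi (by decide)
            have hne0 : (0 : Fin 4) ≠ i := by
              intro h
              rw [← h] at hi
              exact absurd hi (by decide)
            have th012 := conv _ (by
              rw [hV two _ (tri_mem_hornP (0 : Fin 4) 1 2 (by decide) (by decide) 3 hne3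
                (by decide) (by decide) (by decide))]
              exact u1_elt_thin X _)
            have th023 := conv _ (by
              rw [hV two _ (tri_mem_hornP (0 : Fin 4) 2 3 (by decide) (by decide) 1 hne1
                (by decide) (by decide) (by decide))]
              exact u1_elt_thin X _)
            have th123 := conv _ (by
              rw [hV two _ (tri_mem_hornP (1 : Fin 4) 2 3 (by decide) (by decide) 0 hne0
                (by decide) (by decide) (by decide))]
              exact u1_elt_thin X _)
            rw [hg']; erw [app_eq v.map]
            exact thin_comp2 X hX _ th012 th023 th123
  have hpred : ∀ φ : SimplexCategory.mk 2 ⟶ SimplexCategory.mk n,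
      X.carrier.map φ.op (v.map.app (op (SimplexCategory.mk n)) (idElt n)) ∈ X.thin := by
    intro φ
    exact app_eq v.map (φ.toOrderHom : (stdSimplex n).obj two) ▸ hthin φ.toOrderHom
  let σtop : (u1 X).obj (op (SimplexCategory.mk n)) :=
    ⟨v.map.app (op (SimplexCategory.mk n)) (idElt n), hpred⟩
  refine ⟨stdToSub X n σtop, ?_⟩
  · apply SSet.hom_ext
    intro m
    ext a
    apply Subtype.ext
    have h1 := hV m (SSet.stdSimplex.asOrderHom a.1) (hornP_of_mem a)
    have h2 : hornElt (i := i) (SSet.stdSimplex.asOrderHom a.1) (hornP_of_mem a) = a := Subtype.ext rfl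
    rw [h2] at h1
    change ((σ₀.app m) a).1 = _
    rw [← h1]
    exact app_eq v.map (SSet.stdSimplex.asOrderHom a.1)

/-- If a scaled simplicial set `X` has the right lifting
property with respect to every scaled anodyne map, then the simplicial subset
`u₁X` of simplices all of whose 2-dimensional faces are thin is a
quasicategory. -/
theorem u1_quasicategory_of_rlp (X : SScaled)
    (hX : ∀ ⦃A B : SScaled⦄ (g : A ⟶ B), ScaledAnodyne g →
      ∀ u : A ⟶ X, ∃ v : B ⟶ X, g ≫ v = u) :
    SSet.Quasicategory (u1 X) := by
  constructor
  intro n i σ₀ h0 hn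
  exact filler X hX (n + 2) i (by simpa using Fin.lt_iff_val_lt_val.mp h0)
    (by simpa using Fin.lt_iff_val_lt_val.mp hn) σ₀

end ScaledSSet
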